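/- Let d₁, d₂ ∈ ℂ^N be unit vectors with r = |⟨d₂, d₁⟩| < 1, and let φ ∈ ℝ be such that ⟨d₂, d₁⟩ = r e^{iφ}. Let q ∈ [0, 1] and define c₂ = √((1−q)/(1−r²)) and c₁ = (r c₂ − √q) e^{i(π−φ)}, and z° = c₁ d₁ + c₂ d₂. Then ‖z°‖ = 1, |⟨d₁, z°⟩|² = q, and |⟨d₂, z°⟩|² = 1 − (r√(1−q) − √((1−r²)q))². In particular, z° attains the maximum of |⟨d₂, z⟩|² over unit vectors z with |⟨d₁, z⟩|² = q. -/

import Mathlib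

/-!
Split a unit vector `y` along `d₁` and its orthogonal complement, and likewise `d₂`.
Cauchy–Schwarz on the orthogonal parts gives
`|⟨d₂, y⟩| ≤ r |⟨d₁, y⟩| + √(1 - r²) √(1 - |⟨d₁, y⟩|²) = r √q + √(1 - r²) √(1 - q)`.
The vector `z°` attains this bound: its component along `d₁` is in phase with `⟨d₁, d₂⟩`, and
its component orthogonal to `d₁` is a nonnegative multiple of that of `d₂`. The stated value of
`|⟨d₂, z°⟩|²` is the square of the bound, rewritten with
`(rs + bt)² + (rt - bs)² = (r² + b²)(s² + t²)` for `s = √q`, `t = √(1 - q)`, `b = √(1 - r²)`.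
-/

open ComplexConjugate
open scoped InnerProductSpace

theorem Real.sqrt_div_sq_mul {a b : ℝ} (ha : 0 ≤ a) (hb : 0 < b) : √(a / b) ^ 2 * b = a := by
  rw [Real.sq_sqrt (div_nonneg ha hb.le), div_mul_cancel₀ a hb.ne']

theorem Real.mul_sqrt_div (a : ℝ) {b : ℝ} (hb : 0 ≤ b) : b * √(a / b) = √b * √a := by
  rw [Real.sqrt_div' a hb, mul_div_left_comm, Real.div_sqrt, mul_comm]

section InnerProductSpace

variable {𝕜 E : Type*} [RCLike 𝕜] [NormedAddCommGroup E] [InnerProductSpace 𝕜 E]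

theorem inner_eq_inner_mul_inner_add_inner_sub_proj {u : E} (hu : ‖u‖ = 1) (x y : E) :
    ⟪x, y⟫_𝕜 = ⟪x, u⟫_𝕜 * ⟪u, y⟫_𝕜 + ⟪x - ⟪u, x⟫_𝕜 • u, y - ⟪u, y⟫_𝕜 • u⟫_𝕜 := by
  have huu : ⟪u, u⟫_𝕜 = 1 := by rw [inner_self_eq_norm_sq_to_K, hu]; simp
  simp only [inner_sub_left, inner_sub_right, inner_smul_left, inner_smul_right, inner_conj_symm,
    huu]
  ring

theorem norm_sub_inner_smul_sq {u : E} (hu : ‖u‖ = 1) (x : E) :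
    ‖x - ⟪u, x⟫_𝕜 • u‖ ^ 2 = ‖x‖ ^ 2 - ‖⟪u, x⟫_𝕜‖ ^ 2 := by
  have h := congrArg RCLike.re (inner_eq_inner_mul_inner_add_inner_sub_proj (𝕜 := 𝕜) hu x x)
  have hxu : ⟪x, u⟫_𝕜 * ⟪u, x⟫_𝕜 = (‖⟪u, x⟫_𝕜‖ ^ 2 : ℝ) := by
    rw [← inner_conj_symm x u, RCLike.conj_mul, norm_inner_symm]; norm_cast
  rw [hxu, map_add, RCLike.ofReal_re, inner_self_eq_norm_sq, inner_self_eq_norm_sq] at h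
  linarith

theorem norm_inner_le_along_unit_add_orthogonal {u : E} (hu : ‖u‖ = 1) (x y : E) :
    ‖⟪x, y⟫_𝕜‖ ≤ ‖⟪u, x⟫_𝕜‖ * ‖⟪u, y⟫_𝕜‖ +
      √(‖x‖ ^ 2 - ‖⟪u, x⟫_𝕜‖ ^ 2) * √(‖y‖ ^ 2 - ‖⟪u, y⟫_𝕜‖ ^ 2) := by
  rw [← norm_sub_inner_smul_sq hu, ← norm_sub_inner_smul_sq hu,
    Real.sqrt_sq (norm_nonneg _), Real.sqrt_sq (norm_nonneg _), ← norm_inner_symm x u]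
  calc ‖⟪x, y⟫_𝕜‖ ≤ ‖⟪x, u⟫_𝕜 * ⟪u, y⟫_𝕜‖ + ‖⟪x - ⟪u, x⟫_𝕜 • u, y - ⟪u, y⟫_𝕜 • u⟫_𝕜‖ := by
        rw [inner_eq_inner_mul_inner_add_inner_sub_proj hu x y]; exact norm_add_le _ _
    _ ≤ _ := by rw [norm_mul]; gcongr; exact norm_inner_le_norm _ _

variable {u v : E} {r : ℝ} {ω : 𝕜}

theorem inner_first_smul_add_smul (hu : ‖u‖ = 1) (huv : ⟪u, v⟫_𝕜 = r * ω) (a b : ℝ) :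
    ⟪u, (a * ω) • u + (b : 𝕜) • v⟫_𝕜 = (a + r * b : ℝ) * ω := by
  have huu : ⟪u, u⟫_𝕜 = 1 := by rw [inner_self_eq_norm_sq_to_K, hu]; simp
  rw [inner_add_right, inner_smul_right, inner_smul_right, huu, huv]
  push_cast; ring

theorem inner_second_smul_add_smul (hv : ‖v‖ = 1) (huv : ⟪u, v⟫_𝕜 = r * ω) (hω : ‖ω‖ = 1)
    (a b : ℝ) : ⟪v, (a * ω) • u + (b : 𝕜) • v⟫_𝕜 = (r * a + b : ℝ) := by
  have hvv : ⟪v, v⟫_𝕜 = 1 := by rw [inner_self_eq_norm_sq_to_K, hv]; simp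
  rw [inner_add_right, inner_smul_right, inner_smul_right, hvv, ← inner_conj_symm, huv, map_mul,
    RCLike.conj_ofReal]
  have hωω : conj ω * ω = 1 := by rw [RCLike.conj_mul, hω]; simp
  push_cast
  linear_combination (a * r : 𝕜) * hωω

theorem norm_smul_add_smul_sq (hu : ‖u‖ = 1) (hv : ‖v‖ = 1) (huv : ⟪u, v⟫_𝕜 = r * ω)
    (hω : ‖ω‖ = 1) (a b : ℝ) :
    ‖(a * ω) • u + (b : 𝕜) • v‖ ^ 2 = a * (a + r * b) + b * (r * a + b) := by
  have hωω : conj ω * ω = 1 := by rw [RCLike.conj_mul, hω]; simp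
  have h : ⟪(a * ω) • u + (b : 𝕜) • v, (a * ω) • u + (b : 𝕜) • v⟫_𝕜 =
      (a * (a + r * b) + b * (r * a + b) : ℝ) := by
    rw [inner_add_left, inner_smul_left, inner_smul_left, inner_first_smul_add_smul hu huv,
      inner_second_smul_add_smul hv huv hω, map_mul, RCLike.conj_ofReal, RCLike.conj_ofReal]
    push_cast
    linear_combination (a * (a + r * b) : 𝕜) * hωω
  rw [← inner_self_eq_norm_sq (𝕜 := 𝕜), h, RCLike.ofReal_re]

/-- The vector `z°`: its `u`-coefficient is chosen so that `⟪u, z°⟫ = √q ω` is in phase with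
`⟪u, v⟫ = r ω`, and its `v`-coefficient so that `‖z°‖ = 1`. -/
noncomputable def extremalVector (u v : E) (r : ℝ) (ω : 𝕜) (q : ℝ) : E :=
  ((√q - r * √((1 - q) / (1 - r ^ 2)) : ℝ) * ω : 𝕜) • u + (√((1 - q) / (1 - r ^ 2)) : 𝕜) • v

theorem inner_first_extremalVector (hu : ‖u‖ = 1) (huv : ⟪u, v⟫_𝕜 = r * ω) (q : ℝ) :
    ⟪u, extremalVector u v r ω q⟫_𝕜 = (√q : 𝕜) * ω := by
  rw [extremalVector, inner_first_smul_add_smul hu huv, sub_add_cancel]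

theorem inner_second_extremalVector (hv : ‖v‖ = 1) (huv : ⟪u, v⟫_𝕜 = r * ω) (hω : ‖ω‖ = 1)
    (hr : r ^ 2 < 1) (q : ℝ) :
    ⟪v, extremalVector u v r ω q⟫_𝕜 = (r * √q + √(1 - r ^ 2) * √(1 - q) : ℝ) := by
  rw [extremalVector, inner_second_smul_add_smul hv huv hω, ← Real.mul_sqrt_div _ (by linarith)]
  congr 1; ring

theorem norm_extremalVector (hu : ‖u‖ = 1) (hv : ‖v‖ = 1) (huv : ⟪u, v⟫_𝕜 = r * ω)
    (hω : ‖ω‖ = 1) (hr : r ^ 2 < 1) {q : ℝ} (hq0 : 0 ≤ q) (hq1 : q ≤ 1) :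
    ‖extremalVector u v r ω q‖ = 1 := by
  rw [← pow_eq_one_iff_of_nonneg (norm_nonneg _) two_ne_zero, extremalVector,
    norm_smul_add_smul_sq hu hv huv hω]
  linear_combination Real.sq_sqrt hq0 + Real.sqrt_div_sq_mul (sub_nonneg.2 hq1) (sub_pos.2 hr)

end InnerProductSpace

/-- For unit vectors `d₁, d₂ ∈ ℂ^N` with `r = |⟨d₂, d₁⟩| < 1`,
`⟨d₂, d₁⟩ = r e^{iφ}`, `q ∈ [0,1]`, `c₂ = √((1−q)/(1−r²))`,
`c₁ = (r c₂ − √q) e^{i(π−φ)}` and `z° = c₁ d₁ + c₂ d₂`, one has `‖z°‖ = 1`,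
`|⟨d₁, z°⟩|² = q`, `|⟨d₂, z°⟩|² = 1 − (r√(1−q) − √((1−r²)q))²`, and `z°` maximizes
`|⟨d₂, z⟩|²` over unit vectors `z` with `|⟨d₁, z⟩|² = q`. -/
theorem stmt4 {N : ℕ} (d₁ d₂ : EuclideanSpace ℂ (Fin N))
    (hd₁ : ‖d₁‖ = 1) (hd₂ : ‖d₂‖ = 1)
    (r φ : ℝ) (hr : r = ‖(inner ℂ d₂ d₁ : ℂ)‖) (hrlt : r < 1)
    (hφ : (inner ℂ d₂ d₁ : ℂ) = (r : ℂ) * Complex.exp (Complex.I * (φ : ℂ)))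
    (q : ℝ) (hq0 : 0 ≤ q) (hq1 : q ≤ 1)
    (c₂ : ℝ) (hc₂ : c₂ = Real.sqrt ((1 - q) / (1 - r ^ 2)))
    (c₁ : ℂ) (hc₁ : c₁ = ((r * c₂ - Real.sqrt q : ℝ) : ℂ) *
      Complex.exp (Complex.I * ((Real.pi - φ : ℝ) : ℂ)))
    (z : EuclideanSpace ℂ (Fin N)) (hzdef : z = c₁ • d₁ + (c₂ : ℂ) • d₂) :
    ‖z‖ = 1 ∧
    ‖(inner ℂ d₁ z : ℂ)‖ ^ 2 = q ∧
    ‖(inner ℂ d₂ z : ℂ)‖ ^ 2 =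
      1 - (r * Real.sqrt (1 - q) - Real.sqrt ((1 - r ^ 2) * q)) ^ 2 ∧
    ∀ y : EuclideanSpace ℂ (Fin N), ‖y‖ = 1 → ‖(inner ℂ d₁ y : ℂ)‖ ^ 2 = q →
      ‖(inner ℂ d₂ y : ℂ)‖ ^ 2 ≤ ‖(inner ℂ d₂ z : ℂ)‖ ^ 2 := by
  have hr0 : 0 ≤ r := hr ▸ norm_nonneg _
  have hr2 : r ^ 2 < 1 := by nlinarith
  set ω := Complex.exp ((-φ : ℝ) * Complex.I) with hωdef
  have hω : ‖ω‖ = 1 := Complex.norm_exp_ofReal_mul_I _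
  have h₁₂ : ⟪d₁, d₂⟫_ℂ = r * ω := by
    rw [← inner_conj_symm, hφ, map_mul, Complex.conj_ofReal, ← Complex.exp_conj, map_mul,
      Complex.conj_I, Complex.conj_ofReal, hωdef]
    push_cast; ring_nf
  have hz : z = extremalVector d₁ d₂ r ω q := by
    rw [hzdef, hc₁, hc₂, show Complex.I * ((Real.pi - φ : ℝ) : ℂ) =
      (-φ : ℝ) * Complex.I + Real.pi * Complex.I by push_cast; ring, Complex.exp_add,
      Complex.exp_pi_mul_I, ← hωdef, extremalVector, RCLike.ofReal_eq_complex_ofReal]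
    congr 2; push_cast; ring
  have hmax : ‖⟪d₂, z⟫_ℂ‖ = r * √q + √(1 - r ^ 2) * √(1 - q) := by
    rw [hz, inner_second_extremalVector hd₂ h₁₂ hω hr2, RCLike.norm_ofReal,
      abs_of_nonneg (by positivity)]
  refine ⟨hz ▸ norm_extremalVector hd₁ hd₂ h₁₂ hω hr2 hq0 hq1, ?_, ?_, fun y hy hqy ↦ ?_⟩
  · rw [hz, inner_first_extremalVector hd₁ h₁₂, norm_mul, hω, RCLike.norm_ofReal, mul_one,
      sq_abs, Real.sq_sqrt hq0]
  · rw [hmax, Real.sqrt_mul (by linarith)]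
    linear_combination (√q ^ 2 + √(1 - q) ^ 2) * Real.sq_sqrt (sub_nonneg.2 hr2.le) +
      Real.sq_sqrt hq0 + Real.sq_sqrt (sub_nonneg.2 hq1)
  · have hbound := norm_inner_le_along_unit_add_orthogonal (𝕜 := ℂ) hd₁ d₂ y
    rw [hd₂, hy, hqy, ← Real.sqrt_sq (norm_nonneg ⟪d₁, y⟫_ℂ), hqy, norm_inner_symm d₁ d₂, ← hr,
      one_pow] at hbound
    rw [hmax]
    gcongr
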